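/- Let H be a real Hilbert space, c : H × H → ℝ a continuous bilinear form, and suppose there exist α > 0 and a bijective bounded linear operator T : H → H such that c(u, T u) ≥ α ‖u‖² for all u ∈ H (T-coercivity). Then for every continuous linear functional f on H, there exists a unique u ∈ H with c(u, v) = f(v) for all v ∈ H. -/

import Mathlib

/-- T-coercivity implies well-posedness: if `c` is a continuous bilinear form on a
real Hilbert space `H` and there exist `α > 0` and a bijective bounded linear
operator `T` with `c(u, Tu) ≥ α ‖u‖²`, then for every continuous linear functional
`f` there is a unique `u` with `c(u, v) = f(v)` for all `v`. -/
theorem stmt_6 {H : Type*} [NormedAddCommGroup H] [InnerProductSpace ℝ H] [CompleteSpace H]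
    (c : H → H → ℝ) (hc : IsBoundedBilinearMap ℝ fun p : H × H => c p.1 p.2)
    (T : H →L[ℝ] H) (hT : Function.Bijective T) (α : ℝ) (hα : 0 < α)
    (hcoer : ∀ u : H, α * ‖u‖ ^ 2 ≤ c u (T u)) :
    ∀ f : H →L[ℝ] ℝ, ∃! u : H, ∀ v : H, c u v = f v := by
  intro f
  set C : H →L[ℝ] H →L[ℝ] ℝ := hc.toContinuousLinearMap with hC
  have hCapp : ∀ u v, C u v = c u v := fun u v => rfl
  -- B u v = c u (T v)
  set B : H →L[ℝ] H →L[ℝ] ℝ :=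
    ((ContinuousLinearMap.compSL H H ℝ (RingHom.id ℝ) (RingHom.id ℝ)).flip T).comp C with hB
  have hBapp : ∀ u v, B u v = c u (T v) := fun u v => rfl
  have hcoerB : IsCoercive B := by
    refine ⟨α, hα, fun u => ?_⟩
    calc α * ‖u‖ * ‖u‖ = α * ‖u‖ ^ 2 := by ring
    _ ≤ c u (T u) := hcoer u
    _ = B u u := (hBapp u u).symm
  -- Riesz representation of f ∘ T
  obtain ⟨y, hy⟩ : ∃ y : H, ∀ w, (inner ℝ y w : ℝ) = f (T w) := by
    refine ⟨(InnerProductSpace.toDual ℝ H).symm (f.comp T), fun w => ?_⟩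
    simp [InnerProductSpace.toDual_symm_apply]
  set e := hcoerB.continuousLinearEquivOfBilin
  refine ⟨e.symm y, fun v => ?_, fun u hu => ?_⟩
  · obtain ⟨w, rfl⟩ := hT.2 v
    have := hcoerB.continuousLinearEquivOfBilin_apply (e.symm y) w
    rw [e.apply_symm_apply, hy w] at this
    exact this.symm
  · have hyu : y = e u := by
      refine hcoerB.unique_continuousLinearEquivOfBilin fun w => ?_
      rw [hy w, hBapp u w, hu (T w)]
    rw [hyu, e.symm_apply_apply]
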